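/- arXiv:1909.13406 — 2 statements merged into one kernel-verified Lean document; each statement's English description precedes it below -/
import Mathlib

section
/- The code T_3 ⊆ 2^{[6]} has an open convex realization in ℝ^3, but has no open convex realization in ℝ^2. -/
/-
Realization in `ℝ³`: the three even sets are the pairwise intersections of three open
half-spaces, and the three odd sets likewise for three other half-spaces, so each parity class
is a sunflower; the half-spaces are chosen so that `U (2j)` and `U (2k+1)` are disjoint for
`j ≠ k`.

No realization in the plane: if three convex open sets in the plane form a sunflower, then
the convex hull of one point from each petal meets the centre. (Separate the centre from the
hull by a line; the points where the segments from the centre to the three chosen points cross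
that line are collinear, and the middle one is forced into the centre.) Choosing
`P k ∈ U (2k) ∩ U (2k+1)` gives a point `α` of the even centre and a point `β` of the odd
centre, both in the triangle `P 0 P 1 P 2`. Ordering the vertices by the ratio of the
barycentric coordinates of `β` and `α` gives `j ≠ k` such that `[α, P j]` meets `[β, P k]`,
and the intersection point would lie in `U (2j) ∩ U (2k+1)`.
-/

/-- The combinatorial code of a collection of sets `U` in `X`: the set of
all `σ ⊆ [n]` such that some point `x ∈ X` lies in exactly the `U i` with `i ∈ σ`. -/
def codeOf {n : ℕ} {X : Type*} (U : Fin n → Set X) : Set (Finset (Fin n)) :=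
  {σ | ∃ x : X, ∀ i, i ∈ σ ↔ x ∈ U i}

/-- `C` has a realization by convex open sets in `ℝ^d`. -/
def HasOpenRealization (n : ℕ) (C : Set (Finset (Fin n))) (d : ℕ) : Prop :=
  ∃ U : Fin n → Set (EuclideanSpace ℝ (Fin d)),
    (∀ i, Convex ℝ (U i)) ∧ (∀ i, IsOpen (U i)) ∧ codeOf U = C

/-- The tangled sunflower code `T_n ⊆ 2^{[2n]}` (neurons `0,…,2n-1`, zero-indexed):
codewords are the pairs `{2k, 2k+1}` for `k < n`, the set of even-indexed neurons,
the set of odd-indexed neurons, all singletons, and the empty set. -/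
def Tcode (n : ℕ) : Set (Finset (Fin (2*n))) :=
  {σ | (∃ k : Fin n, σ = {⟨2*k.val, by omega⟩, ⟨2*k.val+1, by omega⟩})
     ∨ σ = Finset.univ.filter (fun i => i.val % 2 = 0)
     ∨ σ = Finset.univ.filter (fun i => i.val % 2 = 1)
     ∨ (∃ i, σ = {i})
     ∨ σ = ∅}

open Set Module

def IsSunflower {ι X : Type*} (S : ι → Set X) : Prop :=
  Pairwise fun i j => S i ∩ S j ⊆ ⋂ k, S k

def evenNeuron {n : ℕ} (k : Fin n) : Fin (2 * n) := ⟨2 * k, by omega⟩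
def oddNeuron {n : ℕ} (k : Fin n) : Fin (2 * n) := ⟨2 * k + 1, by omega⟩

set_option synthInstance.maxSize 256 in
theorem mem_Tcode_three_iff (σ : Finset (Fin (2 * 3))) :
    σ ∈ Tcode 3 ↔
      (∀ j k, j ≠ k → evenNeuron j ∈ σ → oddNeuron k ∉ σ) ∧
      (∀ j k, j ≠ k → evenNeuron j ∈ σ → evenNeuron k ∈ σ → ∀ l, evenNeuron l ∈ σ) ∧
      (∀ j k, j ≠ k → oddNeuron j ∈ σ → oddNeuron k ∈ σ → ∀ l, oddNeuron l ∈ σ) := by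
  simp only [Tcode, Set.mem_ofPred_eq]
  revert σ
  decide

theorem codeOf_subset_Tcode_three_iff {X : Type*} {U : Fin (2 * 3) → Set X} :
    codeOf U ⊆ Tcode 3 ↔
      (∀ j k, j ≠ k → Disjoint (U (evenNeuron j)) (U (oddNeuron k))) ∧
      IsSunflower (U ∘ evenNeuron) ∧ IsSunflower (U ∘ oddNeuron) := by
  classical
  simp only [IsSunflower, Pairwise, Set.disjoint_left, Set.subset_def (s := _ ∩ _),
    Set.mem_inter_iff, Set.mem_iInter, Function.comp_apply, and_imp]
  constructor
  · intro h
    have hx : ∀ x : X, _ := fun x =>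
      (mem_Tcode_three_iff _).1 (h (⟨x, by simp⟩ : ({i | x ∈ U i} : Finset _) ∈ codeOf U))
    simp only [Finset.mem_filter, Finset.mem_univ, true_and] at hx
    exact ⟨fun j k hjk x => (hx x).1 j k hjk, fun j k hjk x => (hx x).2.1 j k hjk,
      fun j k hjk x => (hx x).2.2 j k hjk⟩
  · rintro ⟨h₁, h₂, h₃⟩ σ ⟨x, hx⟩
    simp only [mem_Tcode_three_iff, hx]
    exact ⟨fun j k hjk => h₁ j k hjk (a := x), fun j k hjk => h₂ hjk x, fun j k hjk => h₃ hjk x⟩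

section Crossing

variable {E : Type*} [AddCommGroup E] [Module ℝ E]

theorem mem_convexHull_range_iff {ι : Type*} [Fintype ι] {P : ι → E} {x : E} :
    x ∈ convexHull ℝ (range P) ↔ ∃ w ∈ stdSimplex ℝ ι, ∑ i, w i • P i = x := by
  classical
  have hP : range P =
      Fintype.linearCombination ℝ P '' range fun i j => if i = j then 1 else 0 := by
    rw [← range_comp]
    congr 1
    ext i
    simp [Fintype.linearCombination_apply]
  rw [hP, ← LinearMap.image_convexHull, convexHull_basis_eq_stdSimplex]
  simp [Fintype.linearCombination_apply]

theorem segment_inter_nonempty_of_mul_le {p q r : E} {a₁ a₂ a₃ m₁ m₂ m₃ : ℝ}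
    (ha₁ : 0 ≤ a₁) (ha₂ : 0 ≤ a₂) (ha₃ : 0 ≤ a₃) (hm₁ : 0 ≤ m₁) (hm₂ : 0 ≤ m₂) (hm₃ : 0 ≤ m₃)
    (ha : a₁ + a₂ + a₃ = 1) (hm : m₁ + m₂ + m₃ = 1)
    (h₁₃ : a₁ * m₃ ≤ a₃ * m₁) (h₃₂ : a₃ * m₂ ≤ a₂ * m₃) (h₁₂ : a₁ * m₂ ≤ a₂ * m₁) :
    (segment ℝ (a₁ • p + a₂ • q + a₃ • r) p ∩
      segment ℝ (m₁ • p + m₂ • q + m₃ • r) q).Nonempty := by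
  obtain rfl : a₂ = 1 - a₁ - a₃ := by linarith
  obtain rfl : m₂ = 1 - m₁ - m₃ := by linarith
  rcases (add_nonneg ha₃ hm₃).eq_or_lt with h | h
  -- `α := a₁ • p + a₂ • q` and `β := m₁ • p + m₂ • q` lie on `[p, q]`; `h₁₂` puts `α` between
  -- `q` and `β`
  · obtain ⟨rfl, rfl⟩ : a₃ = 0 ∧ m₃ = 0 := ⟨by linarith, by linarith⟩
    refine ⟨_, left_mem_segment _ _ _, ?_⟩
    rcases hm₁.eq_or_lt with rfl | hm₁
    · obtain rfl : a₁ = 0 := by nlinarith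
      convert right_mem_segment ℝ _ q using 1
      module
    · have ha₁m₁ : a₁ ≤ m₁ := by nlinarith
      refine ⟨a₁ / m₁, 1 - a₁ / m₁, by positivity,
        by rw [sub_nonneg, div_le_one hm₁]; exact ha₁m₁, by ring, ?_⟩
      match_scalars <;> field_simp <;> ring
  -- `m₃ • α + (D - m₃) • p = a₃ • β + (D - a₃) • q`; dividing by `D` gives the point where
  -- the lines `αp` and `βq` meet, and `h₁₃`, `h₃₂` say it lies on both segments
  · set D := a₃ * m₁ + (1 - a₁ - a₃) * m₃ + a₃ * m₃
    have hmD : m₃ ≤ D := by nlinarith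
    have haD : a₃ ≤ D := by nlinarith
    have hD : 0 < D := by linarith
    refine ⟨(m₃ / D) • (a₁ • p + (1 - a₁ - a₃) • q + a₃ • r) + (1 - m₃ / D) • p,
      ⟨_, _, by positivity, by rw [sub_nonneg, div_le_one hD]; exact hmD, by ring, rfl⟩,
      ⟨a₃ / D, 1 - a₃ / D, by positivity, by rw [sub_nonneg, div_le_one hD]; exact haD,
        by ring, ?_⟩⟩
    match_scalars <;> field_simp <;> ring

theorem mul_le_mul_of_div_add_le_div_add {a b c d : ℝ} (ha : 0 ≤ a) (hb : 0 ≤ b) (hc : 0 ≤ c)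
    (hd : 0 ≤ d) (h : b / (a + b) ≤ d / (c + d)) : c * b ≤ a * d := by
  rcases (add_nonneg ha hb).eq_or_lt with hab | hab
  · obtain ⟨rfl, rfl⟩ : a = 0 ∧ b = 0 := ⟨by linarith, by linarith⟩
    simp
  rcases (add_nonneg hc hd).eq_or_lt with hcd | hcd
  · obtain ⟨rfl, rfl⟩ : c = 0 ∧ d = 0 := ⟨by linarith, by linarith⟩
    simp
  rw [div_le_div_iff₀ hab hcd] at h
  linarith

theorem exists_segment_inter_nonempty {P : Fin 3 → E} {α β : E}
    (hα : α ∈ convexHull ℝ (range P)) (hβ : β ∈ convexHull ℝ (range P)) :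
    ∃ j k, j ≠ k ∧ (segment ℝ α (P j) ∩ segment ℝ β (P k)).Nonempty := by
  obtain ⟨a, ⟨ha₀, ha₁⟩, rfl⟩ := mem_convexHull_range_iff.1 hα
  obtain ⟨m, ⟨hm₀, hm₁⟩, rfl⟩ := mem_convexHull_range_iff.1 hβ
  -- order the vertices by the slope `m i / a i`, rescaled to `m i / (a i + m i)` to stay finite
  set σ := Tuple.sort fun i => m i / (a i + m i)
  have hσ := Tuple.monotone_sort fun i => m i / (a i + m i)
  have hle : ∀ i j : Fin 3, i ≤ j → a (σ j) * m (σ i) ≤ a (σ i) * m (σ j) := fun i j hij =>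
    mul_le_mul_of_div_add_le_div_add (ha₀ _) (hm₀ _) (ha₀ _) (hm₀ _) (hσ hij)
  have hsum : ∀ w : Fin 3 → ℝ, ∑ i, w i = w (σ 2) + w (σ 0) + w (σ 1) := fun w => by
    rw [← Equiv.sum_comp σ, Fin.sum_univ_three]; ring
  have hcomb : ∀ w : Fin 3 → ℝ,
      ∑ i, w i • P i = w (σ 2) • P (σ 2) + w (σ 0) • P (σ 0) + w (σ 1) • P (σ 1) := fun w => by
    rw [← Equiv.sum_comp σ, Fin.sum_univ_three]; abel
  refine ⟨σ 2, σ 0, σ.injective.ne (by decide), ?_⟩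
  rw [hcomb, hcomb]
  exact segment_inter_nonempty_of_mul_le (ha₀ _) (ha₀ _) (ha₀ _) (hm₀ _) (hm₀ _) (hm₀ _)
    (hsum a ▸ ha₁) (hsum m ▸ hm₁) (hle 1 2 (by decide)) (hle 0 1 (by decide))
    (hle 0 2 (by decide))

end Crossing

theorem collinear_of_forall_mem_eq {K V : Type*} [Field K] [AddCommGroup V] [Module K V]
    [FiniteDimensional K V] (hV : finrank K V ≤ 2) {f : Dual K V} (hf : f ≠ 0) {s : Set V} {u : K}
    (hs : ∀ x ∈ s, f x = u) : Collinear K s := by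
  rw [collinear_iff_finrank_le_one]
  have hspan : vectorSpan K s ≤ LinearMap.ker f := by
    rw [vectorSpan_def, Submodule.span_le]
    rintro _ ⟨x, hx, y, hy, rfl⟩
    simp [hs x hx, hs y hy]
  have := Dual.finrank_ker_add_one_of_ne_zero hf
  have := Submodule.finrank_mono hspan
  omega

section Sunflower

variable {E : Type*} [NormedAddCommGroup E] [NormedSpace ℝ E]

/-- Moving from `y` slightly towards `u` lands in `S` (as `y ∈ closure S`), moving slightly
towards `w` lands in `T ∩ V ⊆ S`, and `y` lies between the two points. -/
theorem mem_of_mem_segment_of_mem_closure {S T V : Set E} (hSc : Convex ℝ S) (hSo : IsOpen S)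
    (hVc : Convex ℝ V) (hVo : IsOpen V) (hTo : IsOpen T) (hTV : T ∩ V ⊆ S) {u w y : E}
    (hu : u ∈ S) (hw : w ∈ V) (hy : y ∈ segment ℝ u w) (hyT : y ∈ T) (hyS : y ∈ closure S)
    (hyV : y ∈ closure V) : y ∈ S := by
  have hT : ∀ z : E, ∀ᶠ ε in nhdsWithin (0 : ℝ) (Ioi 0), y + ε • (z - y) ∈ T := fun z =>
    nhdsWithin_le_nhds <| (Continuous.tendsto (by fun_prop) 0).eventually
      (by simpa using hTo.mem_nhds hyT)
  obtain ⟨ε, ⟨hεu, hεw⟩, hε₀, hε₁⟩ :=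
    (((hT u).and (hT w)).and (Ioo_mem_nhdsGT one_pos)).exists
  have hnear : ∀ {W : Set E} {z : E}, Convex ℝ W → IsOpen W → z ∈ W → y ∈ closure W →
      y + ε • (z - y) ∈ W := fun hWc hWo hz hyW => by
    rw [← hWo.interior_eq] at hz ⊢
    exact hWc.openSegment_interior_closure_subset_interior hz hyW
      ⟨ε, 1 - ε, hε₀, sub_pos.2 hε₁, by ring, by module⟩
  obtain ⟨a, b, ha, hb, hab, rfl⟩ := hy
  convert hSc (hnear hSc hSo hu hyS) (hTV ⟨hεw, hnear hVc hVo hw hyV⟩) ha hb hab using 1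
  obtain rfl : b = 1 - a := by linarith
  module

/-- The points of `[c, qT]` in `S ∩ T` form a relatively clopen subset of the segment: a limit
point lies between a point of `[c, qS] ⊆ S` and a point of `[c, qV] ⊆ V`. -/
theorem mem_of_mem_segment_of_inter_subset {S T V : Set E} (hSc : Convex ℝ S) (hSo : IsOpen S)
    (hTc : Convex ℝ T) (hTo : IsOpen T) (hVc : Convex ℝ V) (hVo : IsOpen V)
    (hST : S ∩ T ⊆ V) (hTV : T ∩ V ⊆ S) {c qS qT qV : E} (hc : c ∈ S ∩ T)
    (hqS : qS ∈ S) (hqT : qT ∈ T) (hqV : qV ∈ V) (hq : qT ∈ segment ℝ qS qV) : qT ∈ S := by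
  suffices segment ℝ c qT ⊆ S ∩ T from (this (right_mem_segment ℝ c qT)).1
  refine (convex_segment c qT).isPreconnected.subset_of_closure_inter_subset (hSo.inter hTo)
    ⟨c, left_mem_segment ℝ c qT, hc⟩ ?_
  rintro y ⟨hycl, hyseg⟩
  have hyT : y ∈ T := hTc.segment_subset hc.2 hqT hyseg
  refine ⟨?_, hyT⟩
  obtain ⟨s, t, hs, ht, hst, rfl⟩ := hyseg
  obtain ⟨a, b, ha, hb, hab, rfl⟩ := hq
  refine mem_of_mem_segment_of_mem_closure hSc hSo hVc hVo hTo hTV (hSc hc.1 hqS hs ht hst)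
    (hVc (hST hc) hqV hs ht hst) ⟨a, b, ha, hb, hab, ?_⟩ hyT (closure_mono inter_subset_left hycl)
    (closure_mono hST hycl)
  obtain rfl : b = 1 - a := by linarith
  module

theorem IsSunflower.inter_convexHull_nonempty [FiniteDimensional ℝ E] (hE : finrank ℝ E ≤ 2)
    {S : Fin 3 → Set E} (hS : IsSunflower S) (hSc : ∀ i, Convex ℝ (S i)) (hSo : ∀ i, IsOpen (S i))
    (hne : (⋂ i, S i).Nonempty) {x : Fin 3 → E} (hx : ∀ i, x i ∈ S i) :
    ((⋂ i, S i) ∩ convexHull ℝ (range x)).Nonempty := by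
  by_contra hempty
  rw [not_nonempty_iff_eq_empty, ← disjoint_iff_inter_eq_empty] at hempty
  obtain ⟨f, u, hfS, hfx⟩ := geometric_hahn_banach_open (convex_iInter hSc)
    (isOpen_iInter_of_finite hSo) (convex_convexHull ℝ _) hempty
  obtain ⟨c, hc⟩ := hne
  have hfxi : ∀ i, u ≤ f (x i) := fun i => hfx _ (subset_convexHull ℝ _ (mem_range_self i))
  have hq : ∀ i, ∃ q ∈ S i, f q = u := fun i => by
    obtain ⟨q, hq, hfq⟩ := (convex_segment c (x i)).isPreconnected.intermediate_value
      (left_mem_segment ℝ _ _) (right_mem_segment ℝ _ _) f.continuous.continuousOn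
      ⟨(hfS c hc).le, hfxi i⟩
    exact ⟨q, (hSc i).segment_subset (mem_iInter.1 hc i) (hx i) hq, hfq⟩
  choose q hqS hfq using hq
  have hf : (f : Dual ℝ E) ≠ 0 := fun h => by
    have := hfS c hc
    have := hfxi 0
    simp_all [DFunLike.ext_iff]
  have hcol : Collinear ℝ {q 0, q 1, q 2} :=
    collinear_of_forall_mem_eq hE hf (u := u) (by simp [hfq])
  have hbtw : ∀ i j k, i ≠ j → j ≠ k → Wbtw ℝ (q i) (q j) (q k) → False := by
    intro i j k hij hjk h
    have hqj : q j ∈ S i := mem_of_mem_segment_of_inter_subset (hSc i) (hSo i) (hSc j) (hSo j)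
      (hSc k) (hSo k) ((hS hij).trans (iInter_subset _ k)) ((hS hjk).trans (iInter_subset _ i))
      ⟨mem_iInter.1 hc i, mem_iInter.1 hc j⟩ (hqS i) (hqS j) (hqS k) (mem_segment_iff_wbtw.2 h)
    exact (hfS _ (hS hij ⟨hqj, hqS j⟩)).ne (hfq j)
  rcases hcol.wbtw_or_wbtw_or_wbtw with h | h | h
  exacts [hbtw 0 1 2 (by decide) (by decide) h, hbtw 1 2 0 (by decide) (by decide) h,
    hbtw 2 0 1 (by decide) (by decide) h]

end Sunflower

theorem codeOf_ne_Tcode_three {E : Type*} [NormedAddCommGroup E] [NormedSpace ℝ E]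
    [FiniteDimensional ℝ E] (hE : finrank ℝ E ≤ 2) {U : Fin (2 * 3) → Set E}
    (hc : ∀ i, Convex ℝ (U i)) (ho : ∀ i, IsOpen (U i)) : codeOf U ≠ Tcode 3 := by
  intro hcode
  obtain ⟨hdisj, hsunE, hsunO⟩ := codeOf_subset_Tcode_three_iff.1 hcode.le
  have hword : ∀ σ ∈ Tcode 3, ∃ x, ∀ i, i ∈ σ ↔ x ∈ U i := fun σ hσ => hcode.ge hσ
  obtain ⟨a, ha⟩ := hword _ (Or.inr (Or.inl rfl))
  obtain ⟨b, hb⟩ := hword _ (Or.inr (Or.inr (Or.inl rfl)))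
  have hP : ∀ k, ∃ p, p ∈ U (evenNeuron k) ∧ p ∈ U (oddNeuron k) := fun k => by
    obtain ⟨p, hp⟩ := hword _ (Or.inl ⟨k, rfl⟩)
    exact ⟨p, (hp _).1 (by simp [evenNeuron]), (hp _).1 (by simp [oddNeuron])⟩
  choose P hPe hPo using hP
  obtain ⟨α, hαE, hαP⟩ := hsunE.inter_convexHull_nonempty hE (fun _ => hc _) (fun _ => ho _)
    ⟨a, mem_iInter.2 fun k => (ha _).1 (by simp [evenNeuron])⟩ hPe
  obtain ⟨β, hβO, hβP⟩ := hsunO.inter_convexHull_nonempty hE (fun _ => hc _) (fun _ => ho _)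
    ⟨b, mem_iInter.2 fun k => (hb _).1 (by simp [oddNeuron])⟩ hPo
  obtain ⟨j, k, hjk, y, hyα, hyβ⟩ := exists_segment_inter_nonempty hαP hβP
  exact disjoint_left.1 (hdisj j k hjk)
    ((hc _).segment_subset (mem_iInter.1 hαE j) (hPe j) hyα)
    ((hc _).segment_subset (mem_iInter.1 hβO k) (hPo k) hyβ)

section Realization

def halfSpace (a b c : ℝ) : Set (EuclideanSpace ℝ (Fin 3)) :=
  {x | 0 < a * x 0 + b * x 1 + c * x 2}

theorem convex_halfSpace (a b c : ℝ) : Convex ℝ (halfSpace a b c) :=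
  convex_halfSpace_gt ⟨fun x y => by simp only [PiLp.add_apply]; ring,
    fun s x => by simp only [PiLp.smul_apply, smul_eq_mul]; ring⟩ 0

theorem isOpen_halfSpace (a b c : ℝ) : IsOpen (halfSpace a b c) :=
  isOpen_lt continuous_const (by fun_prop)

/-- The even sets are the pairwise intersections of `x₂ < x₁`, `x₂ < x₀`, `x₀ + x₁ + x₂ < 0`,
the odd sets those of `0 < x₁ + x₂`, `0 < x₀ + x₂`, `x₀ + x₁ < x₂`. -/
def tangledRealization : Fin (2 * 3) → Set (EuclideanSpace ℝ (Fin 3)) :=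
  ![halfSpace 0 1 (-1) ∩ halfSpace (-1) (-1) (-1), halfSpace 0 1 1 ∩ halfSpace (-1) (-1) 1,
    halfSpace 1 0 (-1) ∩ halfSpace (-1) (-1) (-1), halfSpace 1 0 1 ∩ halfSpace (-1) (-1) 1,
    halfSpace 1 0 (-1) ∩ halfSpace 0 1 (-1), halfSpace 1 0 1 ∩ halfSpace 0 1 1]

theorem isSunflower_tangledRealization_even : IsSunflower (tangledRealization ∘ evenNeuron) := by
  intro i j hij x hx
  rw [mem_iInter]
  intro k
  fin_cases i <;> fin_cases j <;> fin_cases k <;>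
    simp_all [tangledRealization, evenNeuron]

theorem isSunflower_tangledRealization_odd : IsSunflower (tangledRealization ∘ oddNeuron) := by
  intro i j hij x hx
  rw [mem_iInter]
  intro k
  fin_cases i <;> fin_cases j <;> fin_cases k <;>
    simp_all [tangledRealization, oddNeuron]

theorem disjoint_tangledRealization {j k : Fin 3} (hjk : j ≠ k) :
    Disjoint (tangledRealization (evenNeuron j)) (tangledRealization (oddNeuron k)) := by
  rw [Set.disjoint_left]
  intro x hj hk
  fin_cases j <;> fin_cases k <;>
    simp_all [tangledRealization, evenNeuron, oddNeuron, halfSpace] <;> linarith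

attribute [local simp] tangledRealization halfSpace Matrix.cons_val_two in
theorem hasOpenRealization_Tcode_three : HasOpenRealization (2 * 3) (Tcode 3) 3 := by
  refine ⟨tangledRealization, fun i => ?_, fun i => ?_,
    (codeOf_subset_Tcode_three_iff.2 ⟨fun j k => disjoint_tangledRealization,
      isSunflower_tangledRealization_even, isSunflower_tangledRealization_odd⟩).antisymm ?_⟩
  · fin_cases i <;> exact (convex_halfSpace _ _ _).inter (convex_halfSpace _ _ _)
  · fin_cases i <;> exact (isOpen_halfSpace _ _ _).inter (isOpen_halfSpace _ _ _)
  rintro σ (⟨k, rfl⟩ | rfl | rfl | ⟨i, rfl⟩ | rfl)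
  · fin_cases k
    · exact ⟨!₂[-2, 1, 0], fun i => by fin_cases i <;> norm_num⟩
    · exact ⟨!₂[1, -2, 0], fun i => by fin_cases i <;> norm_num⟩
    · exact ⟨!₂[1, 1, 0], fun i => by fin_cases i <;> norm_num⟩
  · exact ⟨!₂[0, 0, -1], fun i => by fin_cases i <;> norm_num⟩
  · exact ⟨!₂[0, 0, 1], fun i => by fin_cases i <;> norm_num⟩
  · fin_cases i
    · exact ⟨!₂[-2, 1, -1], fun i => by fin_cases i <;> norm_num⟩
    · exact ⟨!₂[-2, 1, 1], fun i => by fin_cases i <;> norm_num⟩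
    · exact ⟨!₂[1, -2, -1], fun i => by fin_cases i <;> norm_num⟩
    · exact ⟨!₂[1, -2, 1], fun i => by fin_cases i <;> norm_num⟩
    · exact ⟨!₂[1, 1, -1], fun i => by fin_cases i <;> norm_num⟩
    · exact ⟨!₂[1, 1, 1], fun i => by fin_cases i <;> norm_num⟩
  · exact ⟨0, fun i => by fin_cases i <;> norm_num⟩

end Realization

/-- `T 3` has an open convex realization in `ℝ^3` but none in `ℝ^2`. -/
theorem Tcode_three : HasOpenRealization (2*3) (Tcode 3) 3 ∧
    ¬ HasOpenRealization (2*3) (Tcode 3) 2 :=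
  ⟨hasOpenRealization_Tcode_three, fun ⟨_, hc, ho, hcode⟩ =>
    codeOf_ne_Tcode_three (by simp) hc ho hcode⟩
end

section
/- Let p_1, p_2, p_3, p_4, p_5 be five points in ℝ^3 in general position (no four of the points lie in a common affine plane). Then there is a partition of {1,…,5} into a three-element set {a,b,c} and a two-element set {s,t}, a nonzero linear functional f : ℝ^3 → ℝ, and a constant r ∈ ℝ, such that f(p_a) = f(p_b) = f(p_c) = r, f(p_s) > r, and f(p_t) < r. That is, some plane through three of the points strictly separates the remaining two. -/
/-!
Five points in `ℝ³` are affinely dependent: `∑ wᵢ pᵢ = 0` with `∑ wᵢ = 0` and `w ≠ 0`. General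
position forces every `wᵢ ≠ 0`, so two weights `w_s`, `w_t` have the same sign. Let `f = r` be a
plane through the other three points. Applying `f` to the relation leaves
`w_s (f p_s - r) + w_t (f p_t - r) = 0`, so `f p_s - r` and `f p_t - r` have opposite signs; they
are nonzero, since otherwise all five points, among them four affinely independent ones, would lie
in the plane.
-/

open Finset Module

theorem exists_ne_mul_pos_of_two_lt_card {ι k : Type*} [Fintype ι] [Ring k] [LinearOrder k]
    [IsStrictOrderedRing k] {w : ι → k} (hw : ∀ i, w i ≠ 0) (hcard : 2 < Fintype.card ι) :
    ∃ s t, s ≠ t ∧ 0 < w s * w t := by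
  obtain ⟨s, t, hst, hsign⟩ :=
    Fintype.exists_ne_map_eq_of_card_lt (fun i => 0 < w i) (by rwa [Fintype.card_prop])
  refine ⟨s, t, hst, ?_⟩
  by_cases hs : 0 < w s
  · exact mul_pos hs (hsign ▸ hs)
  · have ht : ¬0 < w t := hsign ▸ hs
    exact mul_pos_of_neg_of_neg ((not_lt.1 hs).lt_of_ne (hw s)) ((not_lt.1 ht).lt_of_ne (hw t))

theorem mul_neg_of_mul_add_mul_eq_zero {k : Type*} [CommRing k] [LinearOrder k]
    [IsStrictOrderedRing k] {a b x y : k} (hab : 0 < a * b) (h : a * x + b * y = 0)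
    (hx : x ≠ 0) : x * y < 0 := by
  have hax : a * x ≠ 0 := mul_ne_zero (left_ne_zero_of_mul hab.ne') hx
  have hprod : a * b * (x * y) = -(a * x) ^ 2 := by linear_combination (a * x) * h
  exact neg_of_mul_neg_right (hprod ▸ neg_neg_of_pos (pow_two_pos_of_ne_zero hax)) hab.le

section

variable {k E ι : Type*} [Field k] [AddCommGroup E] [Module k E] {p : ι → E}

theorem vectorSpan_range_eq_top_of_affineIndependent_restrict [FiniteDimensional k E]
    {s : Finset ι} (hs : AffineIndependent k (fun i : s => p i)) (hcard : #s = finrank k E + 1) :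
    vectorSpan k (Set.range p) = ⊤ := by
  have htop := AffineSubspace.vectorSpan_eq_top_of_affineSpan_eq_top k E E
    (hs.affineSpan_eq_top_iff_card_eq_finrank_add_one.2 (by simpa using hcard))
  exact eq_top_iff.2 (htop ▸ vectorSpan_mono k (Set.range_subset_iff.2 fun i => ⟨i, rfl⟩))

theorem LinearMap.eq_zero_of_apply_eq_of_vectorSpan_eq_top (hp : vectorSpan k (Set.range p) = ⊤)
    {f : E →ₗ[k] k} {r : k} (hf : ∀ i, f (p i) = r) : f = 0 := by
  refine LinearMap.ker_eq_top.1 (eq_top_iff.2 (hp ▸ ?_))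
  rw [vectorSpan_def, Submodule.span_le]
  rintro _ ⟨_, ⟨i, rfl⟩, _, ⟨j, rfl⟩, rfl⟩
  simp [hf]

theorem exists_ne_zero_apply_eq_of_card_le_finrank [FiniteDimensional k E]
    {s : Finset ι} (hne : s.Nonempty) (hcard : #s ≤ finrank k E) :
    ∃ f : E →ₗ[k] k, f ≠ 0 ∧ ∃ r, ∀ i ∈ s, f (p i) = r := by
  classical
  obtain ⟨n, hn⟩ := Nat.exists_eq_succ_of_ne_zero hne.card_pos.ne'
  have hlt : vectorSpan k (s.image p : Set E) < ⊤ :=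
    Submodule.lt_top_of_finrank_lt_finrank
      ((finrank_vectorSpan_image_finset_le k p s hn).trans_lt (by omega))
  obtain ⟨f, hf, hker⟩ := Submodule.exists_le_ker_of_lt_top _ hlt
  obtain ⟨i₀, hi₀⟩ := hne
  refine ⟨f, hf, f (p i₀), fun i hi => sub_eq_zero.1 ?_⟩
  rw [← map_sub]
  exact hker (vsub_mem_vectorSpan k (by simpa using ⟨i, hi, rfl⟩) (by simpa using ⟨i₀, hi₀, rfl⟩))

variable [Fintype ι]

theorem exists_affine_relation_of_finrank_add_one_lt_card [FiniteDimensional k E]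
    (hcard : finrank k E + 1 < Fintype.card ι) :
    ∃ w : ι → k, ∑ i, w i = 0 ∧ ∑ i, w i • p i = 0 ∧ w ≠ 0 := by
  have hdep : ¬AffineIndependent k p := fun h =>
    (h.card_le_finrank_succ.trans (by simpa using Submodule.finrank_le _)).not_gt hcard
  simp only [affineIndependent_iff_of_fintype, not_forall] at hdep
  obtain ⟨w, hw₀, hw₁, i, hwi⟩ := hdep
  exact ⟨w, hw₀, by rwa [univ.weightedVSub_eq_linear_combination hw₀] at hw₁,
    fun h => hwi (congrFun h i)⟩

theorem forall_ne_zero_of_affine_relation {n : ℕ} (hcard : Fintype.card ι = n + 2)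
    (hgen : ∀ s : Finset ι, #s = n + 1 → AffineIndependent k (fun i : s => p i))
    {w : ι → k} (hw₀ : ∑ i, w i = 0) (hw₁ : ∑ i, w i • p i = 0) (hw : w ≠ 0) : ∀ i, w i ≠ 0 := by
  classical
  intro i hi
  refine hw (funext fun j => ?_)
  rcases eq_or_ne j i with rfl | hji
  · exact hi
  have hs : #(univ.erase i) = n + 1 := by simp [card_erase_of_mem, hcard]
  refine (hgen _ hs).eq_zero_of_sum_eq_zero (s := univ) (w := fun j : univ.erase i => w j)
    ?_ ?_ ⟨j, by simpa⟩ (mem_univ _)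
  · rwa [sum_coe_sort (univ.erase i) w, sum_erase _ hi]
  · rw [sum_coe_sort (univ.erase i) (fun j => w j • p j), sum_erase _ (by rw [hi, zero_smul])]
    exact hw₁

theorem mul_sub_add_mul_sub_eq_zero_of_affine_relation {w : ι → k} (hw₀ : ∑ i, w i = 0)
    (hw₁ : ∑ i, w i • p i = 0) (f : E →ₗ[k] k) {r : k} {s t : ι} (hst : s ≠ t)
    (hr : ∀ i, i ≠ s → i ≠ t → f (p i) = r) :
    w s * (f (p s) - r) + w t * (f (p t) - r) = 0 := by
  have hsum : ∑ i, w i * (f (p i) - r) = 0 := by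
    simp only [mul_sub, sum_sub_distrib, ← sum_mul, hw₀, zero_mul, sub_zero]
    simpa [map_sum, map_smul] using congrArg f hw₁
  rwa [Fintype.sum_eq_add s t hst fun i hi => by rw [hr i hi.1 hi.2, sub_self, mul_zero]] at hsum

theorem exists_hyperplane_strictly_separating_pair [FiniteDimensional k E] [Nontrivial E]
    [LinearOrder k] [IsStrictOrderedRing k] (hcard : Fintype.card ι = finrank k E + 2)
    (hgen : ∀ s : Finset ι, #s = finrank k E + 1 → AffineIndependent k (fun i : s => p i)) :
    ∃ s t, s ≠ t ∧ ∃ f : E →ₗ[k] k, f ≠ 0 ∧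
      ∃ r, (∀ i, i ≠ s → i ≠ t → f (p i) = r) ∧ r < f (p s) ∧ f (p t) < r := by
  classical
  have hd : 0 < finrank k E := finrank_pos
  obtain ⟨w, hw₀, hw₁, hw⟩ := exists_affine_relation_of_finrank_add_one_lt_card (k := k) (p := p)
    (by omega)
  have hw := forall_ne_zero_of_affine_relation hcard hgen hw₀ hw₁ hw
  obtain ⟨s, t, hst, hwst⟩ := exists_ne_mul_pos_of_two_lt_card hw (by omega)
  have hcompl : #({s, t}ᶜ : Finset ι) = finrank k E := by
    rw [card_compl, card_pair hst]; omega
  obtain ⟨f, hf, r, hr⟩ := exists_ne_zero_apply_eq_of_card_le_finrank (p := p)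
    (card_pos.1 (hcompl ▸ hd)) hcompl.le
  replace hr : ∀ i, i ≠ s → i ≠ t → f (p i) = r := fun i his hit => hr i (by simp [his, hit])
  have hrel := mul_sub_add_mul_sub_eq_zero_of_affine_relation hw₀ hw₁ f hst hr
  have hspan := vectorSpan_range_eq_top_of_affineIndependent_restrict
    (hgen (univ.erase s) (by simp [card_erase_of_mem, hcard])) (by simp [card_erase_of_mem, hcard])
  have hs : f (p s) - r ≠ 0 := by
    intro hs
    have ht : f (p t) - r = 0 := by simpa [hs, hw t] using hrel
    refine hf (LinearMap.eq_zero_of_apply_eq_of_vectorSpan_eq_top hspan (r := r) fun i => ?_)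
    by_cases his : i = s
    · exact his ▸ sub_eq_zero.1 hs
    by_cases hit : i = t
    · exact hit ▸ sub_eq_zero.1 ht
    exact hr i his hit
  rcases mul_neg_iff.1 (mul_neg_of_mul_add_mul_eq_zero hwst hrel hs) with ⟨hs, ht⟩ | ⟨hs, ht⟩
  · exact ⟨s, t, hst, f, hf, r, hr, by linarith, by linarith⟩
  · exact ⟨t, s, hst.symm, f, hf, r, fun i hit his => hr i his hit, by linarith, by linarith⟩

end

/-- Given five points in general position in `ℝ^3` (every four affinely independent),
some plane through three of the points strictly separates the remaining two. -/
theorem five_points_separating_plane (p : Fin 5 → EuclideanSpace ℝ (Fin 3))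
    (hgen : ∀ s : Finset (Fin 5), s.card = 4 →
      AffineIndependent ℝ (fun i : s => p i)) :
    ∃ a b c s t : Fin 5, ({a, b, c, s, t} : Finset (Fin 5)) = Finset.univ ∧
      ∃ f : EuclideanSpace ℝ (Fin 3) →ₗ[ℝ] ℝ, f ≠ 0 ∧
        ∃ r : ℝ, f (p a) = r ∧ f (p b) = r ∧ f (p c) = r ∧
          r < f (p s) ∧ f (p t) < r := by
  obtain ⟨s, t, hst, f, hf, r, hr, hs, ht⟩ :=
    exists_hyperplane_strictly_separating_pair (k := ℝ) (p := p) (by simp)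
      (fun S hS => hgen S (by simpa using hS))
  obtain ⟨a, b, c, -, -, -, habc⟩ :
      ∃ a b c, a ≠ b ∧ a ≠ c ∧ b ≠ c ∧ ({s, t}ᶜ : Finset (Fin 5)) = {a, b, c} :=
    card_eq_three.1 (by rw [card_compl, card_pair hst]; rfl)
  have hmem : ∀ i ∈ ({a, b, c} : Finset (Fin 5)), f (p i) = r := fun i hi => by
    rw [← habc, mem_compl, mem_insert, mem_singleton, not_or] at hi
    exact hr i hi.1 hi.2
  refine ⟨a, b, c, s, t, ?_, f, hf, r, hmem a (by simp), hmem b (by simp), hmem c (by simp), hs, ht⟩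
  rw [← union_compl {s, t}, union_comm, habc]
  simp only [insert_union, singleton_union]
end
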